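/- The 8×8 sub-block conversion matrix H, obtained by vertically stacking the two 4×8 matrices T_4 · E_0 · T_8ᵀ and T_4 · E_1 · T_8ᵀ, is orthogonal: H · Hᵀ = I_8 and Hᵀ · H = I_8. Consequently, for every real 8×8 matrix B̂, conjugation H · B̂ · Hᵀ is an invertible transformation whose inverse is conjugation by Hᵀ. -/

import Mathlib

open Matrix

/-- The orthonormal type-II DCT basis matrix `T_N`. -/
noncomputable def dctMatrix (N : ℕ) : Matrix (Fin N) (Fin N) ℝ :=
  fun i j => Real.sqrt (2 / N) * (if (i : ℕ) = 0 then 1 / Real.sqrt 2 else 1) *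
    Real.cos ((2 * (j : ℕ) + 1) * (i : ℕ) * Real.pi / (2 * N))

/-- The row-selection matrices `E_r ∈ ℝ^{4×8}` for `r ∈ {0,1}`:
`(E_r)_{i,j} = 1` iff `j = i + 4r`. -/
def selMatrix (r : Fin 2) : Matrix (Fin 4) (Fin 8) ℝ :=
  fun i j => if (j : ℕ) = (i : ℕ) + 4 * (r : ℕ) then 1 else 0

/-- The 8×8 sub-block conversion matrix `H`, whose top four rows are
`T_4 * E_0 * T_8ᵀ` and whose bottom four rows are `T_4 * E_1 * T_8ᵀ`. -/
noncomputable def convMatrix : Matrix (Fin 8) (Fin 8) ℝ :=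
  fun i j =>
    if h : (i : ℕ) < 4 then
      (dctMatrix 4 * selMatrix 0 * (dctMatrix 8)ᵀ) ⟨(i : ℕ), h⟩ j
    else
      (dctMatrix 4 * selMatrix 1 * (dctMatrix 8)ᵀ) ⟨(i : ℕ) - 4, by omega⟩ j

/-!
The blocks `X r = T₄ E_r T₈ᵀ` satisfy `X r * (X s)ᵀ = T₄ (E_r E_sᵀ) T₄ᵀ`, since `T₈ᵀ T₈ = 1`, and
`E_r E_sᵀ` is `1` or `0` according as `r = s`; hence the stacked matrix `H` has orthonormal rows.
Orthogonality of `T_N` itself comes from the product-to-sum formula and the telescoping identity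
`2 sin θ · ∑_{j<N} cos((2j+1)θ) = sin(2Nθ)`, whose right side vanishes at `θ = mπ/(2N)` while
`sin θ ≠ 0` for `0 < m < 2N`.
-/

open Real Finset

noncomputable def dctCosSum (N m : ℕ) : ℝ :=
  ∑ j ∈ range N, cos ((2 * j + 1) * m * π / (2 * N))

lemma dctCosSum_zero_right (N : ℕ) : dctCosSum N 0 = N := by
  simp [dctCosSum]

lemma two_mul_sin_mul_sum_range_cos (N : ℕ) (x : ℝ) :
    2 * sin x * ∑ j ∈ range N, cos ((2 * j + 1) * x) = sin (2 * N * x) := by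
  induction N with
  | zero => simp
  | succ N ih =>
    rw [sum_range_succ, mul_add, ih, eq_comm, ← sub_eq_iff_eq_add', sin_sub_sin]
    push_cast
    ring_nf

lemma dctCosSum_eq_zero {N m : ℕ} (hm₀ : 0 < m) (hm : m < 2 * N) : dctCosSum N m = 0 := by
  have hN₀ : (0 : ℝ) < N := by exact_mod_cast (by omega : 0 < N)
  have hN : (0 : ℝ) < 2 * N := by positivity
  have hm₀' : (0 : ℝ) < m := by exact_mod_cast hm₀
  have hsin : 0 < sin (m * π / (2 * N)) := by
    refine sin_pos_of_pos_of_lt_pi (by positivity) ?_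
    rw [div_lt_iff₀ hN, mul_comm π]
    exact mul_lt_mul_of_pos_right (by exact_mod_cast hm) pi_pos
  have htel := two_mul_sin_mul_sum_range_cos N (m * π / (2 * N))
  rw [show 2 * N * (m * π / (2 * N)) = m * π by field_simp, sin_nat_mul_pi,
    mul_eq_zero, or_iff_right (by positivity)] at htel
  simpa only [dctCosSum, mul_div_assoc, mul_assoc] using htel

lemma sum_range_cos_mul_cos {N i k : ℕ} (hi : i < N) (hk : k < N) :
    ∑ j ∈ range N, cos ((2 * j + 1) * i * π / (2 * N)) * cos ((2 * j + 1) * k * π / (2 * N)) =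
      if i = k then (if i = 0 then (N : ℝ) else N / 2) else 0 := by
  wlog hki : k ≤ i generalizing i k
  · rw [sum_congr rfl fun (j : ℕ) _ => mul_comm (cos ((2 * j + 1) * (i : ℝ) * π / (2 * N))) _,
      this hk hi (by omega), if_neg (by omega), if_neg (by omega)]
  have hprod : ∑ j ∈ range N, cos ((2 * j + 1) * i * π / (2 * N)) *
      cos ((2 * j + 1) * k * π / (2 * N)) = (dctCosSum N (i + k) + dctCosSum N (i - k)) / 2 := by
    rw [dctCosSum, dctCosSum, ← sum_add_distrib, sum_div]
    refine sum_congr rfl fun j _ => ?_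
    push_cast [Nat.cast_sub hki]
    rw [show (2 * j + 1) * (i + k : ℝ) * π / (2 * N) =
        (2 * j + 1) * i * π / (2 * N) + (2 * j + 1) * k * π / (2 * N) by ring,
      show (2 * j + 1) * (i - k : ℝ) * π / (2 * N) =
        (2 * j + 1) * i * π / (2 * N) - (2 * j + 1) * k * π / (2 * N) by ring,
      cos_add, cos_sub]
    ring
  rw [hprod]
  rcases eq_or_ne i k with rfl | hne
  · rcases eq_or_ne i 0 with rfl | hi₀
    · simp [dctCosSum_zero_right]
    · simp [hi₀, dctCosSum_zero_right,
        dctCosSum_eq_zero (N := N) (m := i + i) (by omega) (by omega)]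
  · simp [hne, dctCosSum_eq_zero (N := N) (m := i + k) (by omega) (by omega),
      dctCosSum_eq_zero (N := N) (m := i - k) (by omega) (by omega)]

lemma dctMatrix_mul_transpose (N : ℕ) : dctMatrix N * (dctMatrix N)ᵀ = 1 := by
  ext i k
  have hN : (0 : ℝ) < N := by exact_mod_cast i.pos
  have hentry : (dctMatrix N * (dctMatrix N)ᵀ) i k =
      2 / N * ((if (i : ℕ) = 0 then 1 / √2 else 1) * (if (k : ℕ) = 0 then 1 / √2 else 1)) *
        ∑ j ∈ range N, cos ((2 * j + 1) * (i : ℕ) * π / (2 * N)) *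
          cos ((2 * j + 1) * (k : ℕ) * π / (2 * N)) := by
    rw [mul_apply, mul_sum, ← Fin.sum_univ_eq_sum_range,
      ← mul_self_sqrt (by positivity : 0 ≤ 2 / (N : ℝ))]
    refine sum_congr rfl fun j _ => ?_
    rw [transpose_apply, dctMatrix, dctMatrix]
    ring
  rw [hentry, sum_range_cos_mul_cos i.isLt k.isLt, one_apply]
  obtain rfl | hik := eq_or_ne i k
  · by_cases hi₀ : (i : ℕ) = 0
    · simp only [hi₀, if_true]
      field_simp
      norm_num
    · simp only [hi₀, if_true, if_false]
      field_simp
  · simp [hik, Fin.val_ne_of_ne hik]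

lemma transpose_mul_dctMatrix (N : ℕ) : (dctMatrix N)ᵀ * dctMatrix N = 1 :=
  mul_eq_one_comm.mp (dctMatrix_mul_transpose N)

lemma selMatrix_mul_transpose (r s : Fin 2) :
    selMatrix r * (selMatrix s)ᵀ = if r = s then 1 else 0 := by
  ext a b
  have hsel : ∀ (t : Fin 2) (c : Fin 4) (j : Fin 8),
      selMatrix t c j = if j = ⟨c + 4 * t, by omega⟩ then 1 else 0 := fun t c j => by
    simp only [selMatrix, Fin.ext_iff]
  have hrows : ((⟨b + 4 * s, by omega⟩ : Fin 8) = ⟨a + 4 * r, by omega⟩) ↔ r = s ∧ a = b := by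
    simp only [Fin.ext_iff]
    omega
  simp only [mul_apply, transpose_apply, hsel, mul_ite, mul_one, mul_zero, sum_ite_eq', mem_univ,
    if_true, hrows]
  by_cases hrs : r = s <;> by_cases hab : a = b <;> simp [hrs, hab, one_apply]

noncomputable def convBlock (r : Fin 2) : Matrix (Fin 4) (Fin 8) ℝ :=
  dctMatrix 4 * selMatrix r * (dctMatrix 8)ᵀ

lemma convBlock_mul_transpose (r s : Fin 2) :
    convBlock r * (convBlock s)ᵀ = if r = s then 1 else 0 := by
  have hcancel : convBlock r * (convBlock s)ᵀ =
      dctMatrix 4 * (selMatrix r * ((dctMatrix 8)ᵀ * dctMatrix 8) * (selMatrix s)ᵀ) *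
        (dctMatrix 4)ᵀ := by
    simp only [convBlock, transpose_mul, transpose_transpose, Matrix.mul_assoc]
  rw [hcancel, transpose_mul_dctMatrix, Matrix.mul_one, selMatrix_mul_transpose]
  split_ifs
  · rw [Matrix.mul_one, dctMatrix_mul_transpose]
  · rw [Matrix.mul_zero, Matrix.zero_mul]

lemma convMatrix_eq_submatrix_fromRows :
    convMatrix = (fromRows (convBlock 0) (convBlock 1)).submatrix finSumFinEquiv.symm id := by
  ext i j
  refine Fin.addCases (m := 4) (n := 4) (fun i => ?_) (fun i => ?_) i
  · rw [submatrix_apply, finSumFinEquiv_symm_apply_castAdd]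
    simp [convMatrix, convBlock]
  · rw [submatrix_apply, finSumFinEquiv_symm_apply_natAdd]
    simp [convMatrix, convBlock]

lemma fromRows_mul_transpose_eq_one {m₁ m₂ n R : Type*} [Fintype n] [DecidableEq m₁]
    [DecidableEq m₂] [CommSemiring R] {A₁ : Matrix m₁ n R} {A₂ : Matrix m₂ n R}
    (h₁ : A₁ * A₁ᵀ = 1) (h₂ : A₂ * A₂ᵀ = 1) (h₁₂ : A₁ * A₂ᵀ = 0) :
    fromRows A₁ A₂ * (fromRows A₁ A₂)ᵀ = 1 := by
  have h₂₁ : A₂ * A₁ᵀ = 0 := by rw [← transpose_transpose A₂, ← transpose_mul, h₁₂, transpose_zero]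
  rw [transpose_fromRows, fromRows_mul_fromCols, h₁, h₂, h₁₂, h₂₁, fromBlocks_one]

lemma convMatrix_mul_transpose : convMatrix * convMatrixᵀ = 1 := by
  have hrows := fromRows_mul_transpose_eq_one (convBlock_mul_transpose 0 0)
    (convBlock_mul_transpose 1 1) (convBlock_mul_transpose 0 1)
  rw [convMatrix_eq_submatrix_fromRows, transpose_submatrix,
    ← submatrix_mul _ _ _ _ _ Function.bijective_id, hrows, submatrix_one_equiv]

/-- The sub-block conversion matrix `H` is orthogonal, and consequently conjugation by `H`
is inverted by conjugation by `Hᵀ`. -/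
theorem convMatrix_orthogonal :
    convMatrix * convMatrixᵀ = 1 ∧ convMatrixᵀ * convMatrix = 1 ∧
      ∀ B : Matrix (Fin 8) (Fin 8) ℝ,
        convMatrixᵀ * (convMatrix * B * convMatrixᵀ) * convMatrix = B := by
  have hleft : convMatrixᵀ * convMatrix = 1 := mul_eq_one_comm.mp convMatrix_mul_transpose
  refine ⟨convMatrix_mul_transpose, hleft, fun B => ?_⟩
  simp only [← Matrix.mul_assoc, hleft, Matrix.one_mul]
  rw [Matrix.mul_assoc, hleft, Matrix.mul_one]
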